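/- arXiv:1507.05707 — 4 statements merged into one kernel-verified Lean document; each statement's English description precedes it below -/
import Mathlib

section
/- For every matrix A in the special orthogonal group SO(3) there exists a unit quaternion q such that for every vector x = (x₁, x₂, x₃) ∈ ℝ³, the pure quaternion with coordinate vector A·x equals q * v * q⁻¹, where v is the pure quaternion x₁i + x₂j + x₃k. That is, the conjugation map from unit quaternions to SO(3) is surjective, so S³ double covers SO(3). -/
/-!
By the Cartan–Dieudonné theorem every orthogonal map of `ℝ³` is a product of reflections. In
quaternion terms the reflection in the plane orthogonal to a pure quaternion `v` is
`x ↦ -v x v⁻¹`, because `v x v = (v ⬝ᵥ v) x - 2 (v ⬝ᵥ x) v` for pure `v`, `x`. Hence a product of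
`k` reflections is `x ↦ (-1)ᵏ q x q⁻¹` with `q` the product of the `v`s, and `(-1)ᵏ` is its
determinant. For a rotation the sign is `1`, and `q` may be normalised to a unit quaternion.
-/

/-- The pure quaternion with coordinate vector `x`, i.e. `x₁ i + x₂ j + x₃ k`. -/
def pureQuat (x : Fin 3 → ℝ) : Quaternion ℝ := ⟨0, x 0, x 1, x 2⟩

open Quaternion Submodule

@[simp] lemma re_pureQuat (x : Fin 3 → ℝ) : (pureQuat x).re = 0 := rfl
@[simp] lemma imI_pureQuat (x : Fin 3 → ℝ) : (pureQuat x).imI = x 0 := rfl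
@[simp] lemma imJ_pureQuat (x : Fin 3 → ℝ) : (pureQuat x).imJ = x 1 := rfl
@[simp] lemma imK_pureQuat (x : Fin 3 → ℝ) : (pureQuat x).imK = x 2 := rfl

lemma pureQuat_smul (c : ℝ) (x : Fin 3 → ℝ) : pureQuat (c • x) = c • pureQuat x := by
  ext <;> simp

lemma normSq_pureQuat (x : Fin 3 → ℝ) : normSq (pureQuat x) = x ⬝ᵥ x := by
  simp [normSq_def', dotProduct, Fin.sum_univ_three]
  ring

lemma pureQuat_eq_zero {x : Fin 3 → ℝ} : pureQuat x = 0 ↔ x = 0 := by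
  rw [← normSq_eq_zero, normSq_pureQuat, dotProduct_self_eq_zero]

lemma inv_pureQuat (x : Fin 3 → ℝ) : (pureQuat x)⁻¹ = -(x ⬝ᵥ x)⁻¹ • pureQuat x := by
  rw [inv_def, normSq_pureQuat, star_eq_neg.mpr (re_pureQuat x), smul_neg, neg_smul]

lemma pureQuat_mul_mul_self (v x : Fin 3 → ℝ) :
    pureQuat v * pureQuat x * pureQuat v = pureQuat ((v ⬝ᵥ v) • x - (2 * (v ⬝ᵥ x)) • v) := by
  ext <;> simp [re_mul, imI_mul, imJ_mul, imK_mul, dotProduct, Fin.sum_univ_three] <;> ring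

lemma smul_mul_mul_inv_smul {K D : Type*} [Field K] [DivisionRing D] [Algebra K D] {c : K}
    (hc : c ≠ 0) (q x : D) : c • q * x * (c • q)⁻¹ = q * x * q⁻¹ := by
  rw [smul_inv₀, smul_mul_assoc, smul_mul_assoc, mul_smul_comm, smul_smul, mul_inv_cancel₀ hc,
    one_smul]

lemma ofLp_reflection_orthogonal_singleton {n : Type*} [Fintype n] (v x : EuclideanSpace ℝ n) :
    (reflection (ℝ ∙ v)ᗮ x).ofLp =
      x.ofLp - (2 * (v.ofLp ⬝ᵥ x.ofLp) / (v.ofLp ⬝ᵥ v.ofLp)) • v.ofLp := by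
  rw [reflection_orthogonal_apply, reflection_singleton_apply, RCLike.ofReal_real_eq_id, id,
    ← real_inner_self_eq_norm_sq]
  simp only [EuclideanSpace.inner_eq_star_dotProduct, star_trivial, dotProduct_comm x.ofLp]
  ext i
  simp only [WithLp.ofLp_neg, WithLp.ofLp_sub, WithLp.ofLp_smul, Pi.neg_apply, Pi.sub_apply,
    Pi.smul_apply, smul_eq_mul]
  ring

noncomputable def Matrix.UnitaryGroup.toLinearIsometryEquiv {n 𝕜 : Type*} [Fintype n]
    [DecidableEq n] [RCLike 𝕜] (A : Matrix.unitaryGroup n 𝕜) :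
    EuclideanSpace 𝕜 n ≃ₗᵢ[𝕜] EuclideanSpace 𝕜 n :=
  Unitary.linearIsometryEquiv ⟨Matrix.toEuclideanCLM (n := n) (𝕜 := 𝕜) A, Unitary.map_mem _ A.2⟩

lemma Matrix.UnitaryGroup.toLinearMap_toLinearIsometryEquiv {n 𝕜 : Type*} [Fintype n]
    [DecidableEq n] [RCLike 𝕜] (A : Matrix.unitaryGroup n 𝕜) :
    (toLinearIsometryEquiv A).toLinearMap = Matrix.toEuclideanLin (A : Matrix n n 𝕜) :=
  Matrix.coe_toEuclideanCLM_eq_toEuclideanLin _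

local notation "ℝ³" => EuclideanSpace ℝ (Fin 3)

lemma pureQuat_reflection_orthogonal_singleton {v : ℝ³} (hv : v ≠ 0) (x : ℝ³) :
    pureQuat (reflection (ℝ ∙ v)ᗮ x).ofLp =
      -(pureQuat v.ofLp * pureQuat x.ofLp * (pureQuat v.ofLp)⁻¹) := by
  have hvv : v.ofLp ⬝ᵥ v.ofLp ≠ 0 := by simpa [dotProduct_self_eq_zero] using hv
  rw [ofLp_reflection_orthogonal_singleton, inv_pureQuat, mul_smul_comm, neg_smul, neg_neg,
    pureQuat_mul_mul_self, ← pureQuat_smul, smul_sub, smul_smul, inv_mul_cancel₀ hvv, one_smul,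
    smul_smul, inv_mul_eq_div]

def IsSignedQuatConj (φ : ℝ³ ≃ₗᵢ[ℝ] ℝ³) : Prop :=
  ∃ q : Quaternion ℝ, q ≠ 0 ∧ ∀ x,
    pureQuat (φ x).ofLp = LinearMap.det φ.toLinearMap • (q * pureQuat x.ofLp * q⁻¹)

lemma isSignedQuatConj_one : IsSignedQuatConj 1 :=
  ⟨1, one_ne_zero, fun x => by
    rw [show LinearMap.det (1 : ℝ³ ≃ₗᵢ[ℝ] ℝ³).toLinearMap = 1 from LinearMap.det_id]
    simp⟩

lemma IsSignedQuatConj.mul {φ ψ : ℝ³ ≃ₗᵢ[ℝ] ℝ³} (hφ : IsSignedQuatConj φ)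
    (hψ : IsSignedQuatConj ψ) : IsSignedQuatConj (φ * ψ) := by
  obtain ⟨p, hp, hφ⟩ := hφ
  obtain ⟨q, hq, hψ⟩ := hψ
  refine ⟨p * q, mul_ne_zero hp hq, fun x => ?_⟩
  rw [LinearIsometryEquiv.coe_mul, Function.comp_apply, hφ, hψ, mul_smul_comm, smul_mul_assoc,
    mul_inv_rev, smul_smul, show (φ * ψ).toLinearMap = φ.toLinearMap ∘ₗ ψ.toLinearMap from rfl,
    LinearMap.det_comp]
  simp only [mul_assoc]

lemma isSignedQuatConj_reflection (v : ℝ³) : IsSignedQuatConj (reflection (ℝ ∙ v)ᗮ) := by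
  rcases eq_or_ne v 0 with rfl | hv
  · have : reflection (ℝ ∙ (0 : ℝ³))ᗮ = 1 :=
      LinearIsometryEquiv.ext fun x => (reflection_eq_self_iff x).mpr (by simp)
    exact this ▸ isSignedQuatConj_one
  · refine ⟨pureQuat v.ofLp, pureQuat_eq_zero.not.mpr (by simpa using hv), fun x => ?_⟩
    rw [pureQuat_reflection_orthogonal_singleton hv, det_reflection, orthogonal_orthogonal,
      finrank_span_singleton hv, pow_one, neg_one_smul]

lemma LinearIsometryEquiv.isSignedQuatConj (φ : ℝ³ ≃ₗᵢ[ℝ] ℝ³) : IsSignedQuatConj φ := by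
  obtain ⟨l, -, rfl⟩ := φ.reflections_generate_dim
  refine List.prod_induction _ (fun _ _ => IsSignedQuatConj.mul) isSignedQuatConj_one ?_
  simp only [List.mem_map]
  rintro _ ⟨v, -, rfl⟩
  exact isSignedQuatConj_reflection v

/-- Every matrix in SO(3) arises as conjugation by some unit quaternion: the map from unit
quaternions to SO(3) is surjective. -/
theorem SO3_eq_conj_unit_quaternion (A : Matrix (Fin 3) (Fin 3) ℝ)
    (hA : A ∈ Matrix.specialOrthogonalGroup (Fin 3) ℝ) :
    ∃ q : Quaternion ℝ, ‖q‖ = 1 ∧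
      ∀ x : Fin 3 → ℝ, pureQuat (A.mulVec x) = q * pureQuat x * q⁻¹ := by
  set φ := Matrix.UnitaryGroup.toLinearIsometryEquiv ⟨A, hA.1⟩
  have hdet : LinearMap.det φ.toLinearMap = 1 := by
    rw [Matrix.UnitaryGroup.toLinearMap_toLinearIsometryEquiv, LinearMap.det_toLpLin]
    exact hA.2
  obtain ⟨q, hq, hφ⟩ := φ.isSignedQuatConj
  have hq' : ‖q‖ ≠ 0 := norm_ne_zero_iff.mpr hq
  refine ⟨‖q‖⁻¹ • q, by rw [norm_smul, norm_inv, norm_norm, inv_mul_cancel₀ hq'], fun x => ?_⟩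
  rw [smul_mul_mul_inv_smul (inv_ne_zero hq')]
  have hx := hφ (WithLp.toLp 2 x)
  rwa [hdet, one_smul] at hx
end

section
/- Euler's rotation theorem: every matrix A in the special orthogonal group SO(3) fixes some nonzero vector; that is, there exists x ∈ ℝ³ with x ≠ 0 and A·x = x. Equivalently, every orientation-preserving rotation of ℝ³ is a rotation about some axis. -/
/-- Euler's rotation theorem: every matrix in SO(3) fixes some nonzero vector. -/
theorem euler_rotation_theorem (A : Matrix (Fin 3) (Fin 3) ℝ)
    (horth : A.transpose * A = 1) (hdet : A.det = 1) :
    ∃ x : Fin 3 → ℝ, x ≠ 0 ∧ A.mulVec x = x := by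
  have hdetT : A.transpose.det = 1 := by rw [Matrix.det_transpose, hdet]
  have key : (A - 1).det = 0 := by
    have h1 : (A - 1).det = (1 - A).det := by
      calc (A - 1).det = A.transpose.det * (A - 1).det := by rw [hdetT, one_mul]
        _ = (A.transpose * (A - 1)).det := (Matrix.det_mul _ _).symm
        _ = (1 - A.transpose).det := by rw [Matrix.mul_sub, horth, Matrix.mul_one]
        _ = ((1 - A).transpose).det := by
              rw [Matrix.transpose_sub, Matrix.transpose_one]
        _ = (1 - A).det := Matrix.det_transpose _
    have h2 : (1 - A) = -(A - 1) := (neg_sub A 1).symm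
    rw [h2, Matrix.det_neg] at h1
    simp only [Fintype.card_fin] at h1
    norm_num at h1
    linarith
  obtain ⟨v, hv, hmul⟩ := Matrix.exists_mulVec_eq_zero_iff.mpr key
  refine ⟨v, hv, ?_⟩
  rw [Matrix.sub_mulVec, Matrix.one_mulVec, sub_eq_zero] at hmul
  exact hmul
end

section
/- Fibers of the Hopf map are circles: for unit quaternions p and q, one has q * i * q⁻¹ = p * i * p⁻¹ if and only if there exists a real number t with q = p * (cos t + (sin t) • i). That is, two unit quaternions have the same image under the Hopf fibration S³ → S² given by q ↦ q i q⁻¹ exactly when they differ by right multiplication by an element of the circle subgroup {cos t + sin t · i}. -/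
/-!
`q i q⁻¹ = p i p⁻¹` says exactly that `p⁻¹ q` commutes with `i`. The centralizer of `i` in `ℍ`
is the copy of `ℂ` spanned by `1` and `i`, and the unit complex numbers are the
`exp (t i) = cos t + sin t • i`; since `p⁻¹ q` is a unit quaternion, this gives the fiber.
-/

/-- The quaternion `i`. -/
def quatI : Quaternion ℝ := ⟨0, 1, 0, 0⟩

theorem conj_eq_conj_iff_commute_inv_mul {R : Type*} [DivisionRing R] {a b : R} (ha : a ≠ 0)
    (hb : b ≠ 0) (x : R) : b * x * b⁻¹ = a * x * a⁻¹ ↔ Commute (a⁻¹ * b) x := by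
  rw [mul_inv_eq_iff_eq_mul₀ hb, Commute, SemiconjBy, mul_assoc a⁻¹, inv_mul_eq_iff_eq_mul₀ ha]
  simp only [mul_assoc]

open Quaternion

theorem Quaternion.norm_coeComplex (z : ℂ) : ‖(z : ℍ)‖ = ‖z‖ := by
  rw [norm_eq_sqrt_real_inner, inner_self, normSq_def', Complex.norm_def, Complex.normSq_apply]
  simp [sq]

theorem quatI_eq_coeComplex_I : quatI = ((Complex.I : ℂ) : ℍ) := rfl

theorem coeComplex_exp_ofReal_mul_I (t : ℝ) :
    ((Complex.exp (t * Complex.I) : ℂ) : ℍ) = (Real.cos t : ℍ) + Real.sin t • quatI := by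
  rw [quatI_eq_coeComplex_I]
  ext <;> simp [Complex.exp_ofReal_mul_I_re, Complex.exp_ofReal_mul_I_im]

theorem commute_quatI_iff (r : ℍ) : Commute r quatI ↔ ∃ z : ℂ, (z : ℍ) = r := by
  constructor
  · intro h
    rw [quatI_eq_coeComplex_I, Commute, SemiconjBy, Quaternion.ext_iff] at h
    simp only [re_mul, imI_mul, imJ_mul, imK_mul, re_coeComplex, imI_coeComplex, imJ_coeComplex,
      imK_coeComplex, Complex.I_re, Complex.I_im] at h
    obtain ⟨-, -, hJ, hK⟩ := h
    exact ⟨⟨r.re, r.imI⟩, by ext <;> simp <;> linarith⟩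
  · rintro ⟨z, rfl⟩
    rw [quatI_eq_coeComplex_I, Commute, SemiconjBy, ← coeComplex_mul, ← coeComplex_mul, mul_comm]

theorem exists_cos_add_sin_smul_quatI_iff (r : ℍ) :
    (∃ t : ℝ, r = (Real.cos t : ℍ) + Real.sin t • quatI) ↔ ‖r‖ = 1 ∧ Commute r quatI := by
  simp_rw [commute_quatI_iff, ← coeComplex_exp_ofReal_mul_I]
  constructor
  · rintro ⟨t, rfl⟩
    exact ⟨by rw [norm_coeComplex, Complex.norm_exp_ofReal_mul_I], _, rfl⟩
  · rintro ⟨hr, z, rfl⟩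
    obtain ⟨t, rfl⟩ := (Complex.norm_eq_one_iff z).mp (by rwa [norm_coeComplex] at hr)
    exact ⟨t, rfl⟩

/-- Fibers of the Hopf map are circles: two unit quaternions `p` and `q` satisfy
`q * i * q⁻¹ = p * i * p⁻¹` exactly when `q = p * (cos t + sin t • i)` for some real `t`. -/
theorem hopf_fiber_circle (p q : Quaternion ℝ) (hp : ‖p‖ = 1) (hq : ‖q‖ = 1) :
    q * quatI * q⁻¹ = p * quatI * p⁻¹ ↔
      ∃ t : ℝ, q = p * (((Real.cos t : ℝ) : Quaternion ℝ) + Real.sin t • quatI) := by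
  have hp0 : p ≠ 0 := norm_ne_zero_iff.mp (by simp [hp])
  have hq0 : q ≠ 0 := norm_ne_zero_iff.mp (by simp [hq])
  have hpq : ‖p⁻¹ * q‖ = 1 := by rw [norm_mul, norm_inv, hp, hq, inv_one, one_mul]
  rw [conj_eq_conj_iff_commute_inv_mul hp0 hq0, ← and_iff_right (b := Commute (p⁻¹ * q) quatI) hpq,
    ← exists_cos_add_sin_smul_quatI_iff]
  simp_rw [inv_mul_eq_iff_eq_mul₀ hp0]
end

section
/- The rotation group SO(3) is homeomorphic to real projective 3-space ℝP³, the quotient of the sphere S³ obtained by identifying antipodal points (equivalently, the projectivization of ℝ⁴). -/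
/-!
A nonzero quaternion `q` acts on the imaginary quaternions `ℝ³` by `x ↦ q x q⁻¹`, an orientation
preserving isometry; its matrix `toRotation q` is a rational function of the coordinates of `q`,
so `ℝ⁴ \ {0} → SO(3)` is continuous, multiplicative, and invariant under real scalars. It is
injective on lines because the only quaternions acting trivially are the real ones, and it is
onto because `q` can be read off from the trace and the skew part of its rotation matrix
(after composing with a half-turn about a coordinate axis, so that the trace is not `-1`).
A continuous bijection from the compact space `ℝP³` to the Hausdorff space `SO(3)` is a
homeomorphism.
-/

/-- Real projective 3-space carries the quotient topology coming from
`ℝ⁴ \ {0}` (with its subspace topology) under the identification of vectors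
that differ by nonzero scalar multiplication. -/
instance : TopologicalSpace (Projectivization ℝ (Fin 4 → ℝ)) :=
  inferInstanceAs (TopologicalSpace (Quotient (projectivizationSetoid ℝ (Fin 4 → ℝ))))

open Quaternion Matrix
open scoped LinearAlgebra.Projectivization

theorem Matrix.adjugate_eq_transpose_of_mem_specialOrthogonalGroup {n R : Type*} [Fintype n]
    [DecidableEq n] [CommRing R] {A : Matrix n n R} (hA : A ∈ specialOrthogonalGroup n R) :
    adjugate A = Aᵀ := by
  obtain ⟨hAAt, hdet⟩ := mem_specialOrthogonalGroup_iff.mp hA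
  rw [mem_orthogonalGroup_iff] at hAAt
  calc adjugate A = adjugate A * (A * Aᵀ) := by rw [hAAt, Matrix.mul_one]
    _ = Aᵀ := by rw [← Matrix.mul_assoc, adjugate_mul, hdet, one_smul, Matrix.one_mul]

namespace Quaternion

section CommRing

variable {R : Type*} [CommRing R]

/-- `normSq q` times the matrix of `x ↦ q x q⁻¹` on the imaginary quaternions, in the basis
`i, j, k`. -/
def rotMatrix (q : ℍ[R]) : Matrix (Fin 3) (Fin 3) R :=
  !![q.re ^ 2 + q.imI ^ 2 - q.imJ ^ 2 - q.imK ^ 2, 2 * (q.imI * q.imJ - q.re * q.imK),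
      2 * (q.imI * q.imK + q.re * q.imJ);
    2 * (q.imI * q.imJ + q.re * q.imK), q.re ^ 2 - q.imI ^ 2 + q.imJ ^ 2 - q.imK ^ 2,
      2 * (q.imJ * q.imK - q.re * q.imI);
    2 * (q.imI * q.imK - q.re * q.imJ), 2 * (q.imJ * q.imK + q.re * q.imI),
      q.re ^ 2 - q.imI ^ 2 - q.imJ ^ 2 + q.imK ^ 2]

theorem rotMatrix_mul (p q : ℍ[R]) : rotMatrix (p * q) = rotMatrix p * rotMatrix q := by
  ext i j
  fin_cases i <;> fin_cases j <;> simp [rotMatrix, mul_apply, Fin.sum_univ_three] <;> ring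

theorem rotMatrix_star (q : ℍ[R]) : rotMatrix (star q) = (rotMatrix q)ᵀ := by
  ext i j
  fin_cases i <;> fin_cases j <;> simp [rotMatrix] <;> ring

theorem rotMatrix_coe (r : R) : rotMatrix (r : ℍ[R]) = r ^ 2 • 1 := by
  ext i j
  fin_cases i <;> fin_cases j <;> simp [rotMatrix]

theorem det_rotMatrix (q : ℍ[R]) : (rotMatrix q).det = normSq q ^ 3 := by
  simp only [rotMatrix, det_fin_three, normSq_def', of_apply, cons_val', cons_val_zero,
    cons_val_one, cons_val_two, empty_val', cons_val_fin_one, head_cons, tail_cons, head_fin_const]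
  ring

/-- For `A = rotMatrix q / normSq q` this is `(4 * q.re / normSq q) • q`. -/
def ofRotMatrix (A : Matrix (Fin 3) (Fin 3) R) : ℍ[R] :=
  ⟨1 + A.trace, A 2 1 - A 1 2, A 0 2 - A 2 0, A 1 0 - A 0 1⟩

theorem rotMatrix_ofRotMatrix {A : Matrix (Fin 3) (Fin 3) R}
    (hA : A ∈ specialOrthogonalGroup (Fin 3) R) :
    rotMatrix (ofRotMatrix A) = normSq (ofRotMatrix A) • A := by
  have hcof := adjugate_eq_transpose_of_mem_specialOrthogonalGroup hA
  have hAAt := (mem_orthogonalGroup_iff _ _).mp (mem_specialOrthogonalGroup_iff.mp hA).1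
  rw [← Matrix.ext_iff] at hAAt hcof
  simp only [mul_apply, transpose_apply, Fin.sum_univ_three, one_apply, Fin.forall_fin_succ,
    Fin.succ_zero_eq_one, Fin.succ_one_eq_two, IsEmpty.forall_iff, and_true, Fin.isValue,
    ↓reduceIte, zero_ne_one, Fin.reduceEq, Fin.succ_ne_zero, adjugate_fin_three, of_apply,
    cons_val', cons_val_fin_one, cons_val_zero, cons_val_succ] at hAAt hcof
  rw [normSq_def']
  -- each entry lies in the ideal generated by the orthogonality and cofactor relations
  ext i j
  fin_cases i <;> fin_cases j <;> simp [rotMatrix, ofRotMatrix, trace, Fin.sum_univ_three] <;> grind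

end CommRing

noncomputable def toRotation (q : ℍ[ℝ]) : Matrix (Fin 3) (Fin 3) ℝ := (normSq q)⁻¹ • rotMatrix q

theorem toRotation_mul (p q : ℍ[ℝ]) : toRotation (p * q) = toRotation p * toRotation q := by
  rw [toRotation, toRotation, toRotation, map_mul, rotMatrix_mul, mul_inv, smul_mul_smul_comm]

theorem toRotation_coe {r : ℝ} (hr : r ≠ 0) : toRotation (r : ℍ[ℝ]) = 1 := by
  rw [toRotation, rotMatrix_coe, normSq_coe, smul_smul, inv_mul_cancel₀ (pow_ne_zero 2 hr),
    one_smul]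

theorem toRotation_smul {r : ℝ} (hr : r ≠ 0) (q : ℍ[ℝ]) : toRotation (r • q) = toRotation q := by
  rw [← coe_mul_eq_smul, toRotation_mul, toRotation_coe hr, Matrix.one_mul]

theorem toRotation_star (q : ℍ[ℝ]) : toRotation (star q) = (toRotation q)ᵀ := by
  rw [toRotation, toRotation, normSq_star, rotMatrix_star, transpose_smul]

theorem toRotation_mem_specialOrthogonalGroup {q : ℍ[ℝ]} (hq : q ≠ 0) :
    toRotation q ∈ specialOrthogonalGroup (Fin 3) ℝ := by
  have hn : normSq q ≠ 0 := normSq_eq_zero.not.mpr hq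
  refine mem_specialOrthogonalGroup_iff.mpr ⟨(mem_orthogonalGroup_iff _ _).mpr ?_, ?_⟩
  · rw [← toRotation_star, ← toRotation_mul, self_mul_star, toRotation_coe hn]
  · rw [toRotation, det_smul, det_rotMatrix, Fintype.card_fin, inv_pow,
      inv_mul_cancel₀ (pow_ne_zero 3 hn)]

theorem eq_coe_re_of_toRotation_eq_one {q : ℍ[ℝ]} (h : toRotation q = 1) : q = q.re := by
  have hq : normSq q ≠ 0 := by
    rintro hq
    simp [toRotation, hq] at h
  rw [toRotation, inv_smul_eq_iff₀ hq] at h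
  have h00 := congr_fun₂ h 0 0
  have h11 := congr_fun₂ h 1 1
  simp only [rotMatrix, normSq_def', Matrix.smul_apply, one_apply_eq, smul_eq_mul, mul_one,
    of_apply, cons_val', cons_val_zero, cons_val_one, cons_val_fin_one, Fin.isValue] at h00 h11
  ext <;> simp <;> nlinarith [sq_nonneg q.imI, sq_nonneg q.imJ, sq_nonneg q.imK]

theorem exists_eq_smul_of_toRotation_eq {p q : ℍ[ℝ]} (hq : q ≠ 0)
    (h : toRotation p = toRotation q) : ∃ t : ℝ, p = t • q := by
  have hpq : toRotation (p * q⁻¹) = 1 := by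
    rw [toRotation_mul, h, ← toRotation_mul, mul_inv_cancel₀ hq, ← coe_one,
      toRotation_coe one_ne_zero]
  refine ⟨(p * q⁻¹).re, ?_⟩
  rw [← coe_mul_eq_smul, ← eq_coe_re_of_toRotation_eq_one hpq, inv_mul_cancel_right₀ hq]

theorem toRotation_ofRotMatrix {A : Matrix (Fin 3) (Fin 3) ℝ}
    (hA : A ∈ specialOrthogonalGroup (Fin 3) ℝ) (h : ofRotMatrix A ≠ 0) :
    toRotation (ofRotMatrix A) = A := by
  rw [toRotation, rotMatrix_ofRotMatrix hA, inv_smul_smul₀ (normSq_eq_zero.not.mpr h)]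

theorem exists_re_ofRotMatrix_mul_toRotation_pos (A : Matrix (Fin 3) (Fin 3) ℝ) :
    ∃ e : ℍ[ℝ], e ≠ 0 ∧ 0 < (ofRotMatrix (A * toRotation e)).re := by
  by_contra! h
  have hv (v : Fin 4 → ℝ) (hv : normSq ((equivTuple ℝ).symm v) ≠ 0) :=
    h ((equivTuple ℝ).symm v) (normSq_eq_zero.not.mp hv)
  -- the values at `e = 1, i, j, k` are `1 + tr A`, `1 + A₀₀ - A₁₁ - A₂₂`, ..., which sum to `4`
  have h1 := hv ![1, 0, 0, 0] (by rw [normSq_def']; simp)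
  have hi := hv ![0, 1, 0, 0] (by rw [normSq_def']; simp)
  have hj := hv ![0, 0, 1, 0] (by rw [normSq_def']; simp)
  have hk := hv ![0, 0, 0, 1] (by rw [normSq_def']; simp)
  simp only [toRotation, normSq_def'] at h1 hi hj hk
  simp [ofRotMatrix, rotMatrix, trace, mul_apply, Fin.sum_univ_three] at h1 hi hj hk
  linarith

theorem exists_toRotation_eq {A : Matrix (Fin 3) (Fin 3) ℝ}
    (hA : A ∈ specialOrthogonalGroup (Fin 3) ℝ) : ∃ q : ℍ[ℝ], q ≠ 0 ∧ toRotation q = A := by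
  obtain ⟨e, he, hpos⟩ := exists_re_ofRotMatrix_mul_toRotation_pos A
  have hRe := toRotation_mem_specialOrthogonalGroup he
  have hq : ofRotMatrix (A * toRotation e) ≠ 0 := fun h => hpos.ne' (by rw [h, re_zero])
  refine ⟨ofRotMatrix (A * toRotation e) * star e, mul_ne_zero hq (star_ne_zero.mpr he), ?_⟩
  rw [toRotation_mul, toRotation_ofRotMatrix (mul_mem hA hRe) hq, toRotation_star,
    Matrix.mul_assoc, (mem_orthogonalGroup_iff _ _).mp (mem_specialOrthogonalGroup_iff.mp hRe).1,
    Matrix.mul_one]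

theorem continuous_rotMatrix : Continuous (rotMatrix : ℍ[ℝ] → Matrix (Fin 3) (Fin 3) ℝ) := by
  have := continuous_re; have := continuous_imI; have := continuous_imJ; have := continuous_imK
  refine continuous_matrix fun i j => ?_
  fin_cases i <;> fin_cases j <;> simp only [rotMatrix] <;> fun_prop

theorem continuousOn_toRotation : ContinuousOn toRotation {q : ℍ[ℝ] | q ≠ 0} :=
  (continuous_normSq.continuousOn.inv₀ fun _ hq => normSq_eq_zero.not.mpr hq).smul
    continuous_rotMatrix.continuousOn

end Quaternion

noncomputable def quaternionOfTuple : (Fin 4 → ℝ) ≃ₗ[ℝ] ℍ[ℝ] :=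
  (QuaternionAlgebra.linearEquivTuple (-1 : ℝ) 0 (-1)).symm

noncomputable def rotationOfLine : ℙ ℝ (Fin 4 → ℝ) → specialOrthogonalGroup (Fin 3) ℝ :=
  Projectivization.lift
    (fun v => ⟨toRotation (quaternionOfTuple v),
      toRotation_mem_specialOrthogonalGroup (quaternionOfTuple.map_ne_zero_iff.mpr v.2)⟩)
    (by
      rintro ⟨v, hv⟩ ⟨w, -⟩ t rfl
      simp [toRotation_smul (left_ne_zero_of_smul hv)])

theorem rotationOfLine_mk (v : Fin 4 → ℝ) (hv : v ≠ 0) :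
    (rotationOfLine (Projectivization.mk ℝ v hv) : Matrix (Fin 3) (Fin 3) ℝ) =
      toRotation (quaternionOfTuple v) :=
  rfl

theorem rotationOfLine_injective : Function.Injective rotationOfLine := by
  intro x y h
  induction x using Projectivization.ind with | h v hv => ?_
  induction y using Projectivization.ind with | h w hw => ?_
  have hvw := congrArg Subtype.val h
  rw [rotationOfLine_mk, rotationOfLine_mk] at hvw
  obtain ⟨t, ht⟩ := exists_eq_smul_of_toRotation_eq (quaternionOfTuple.map_ne_zero_iff.mpr hw) hvw
  exact (Projectivization.mk_eq_mk_iff' ℝ v w hv hw).mpr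
    ⟨t, quaternionOfTuple.injective (by rw [map_smul, ht])⟩

theorem rotationOfLine_surjective : Function.Surjective rotationOfLine := by
  rintro ⟨A, hA⟩
  obtain ⟨q, hq, rfl⟩ := exists_toRotation_eq hA
  refine ⟨Projectivization.mk ℝ (quaternionOfTuple.symm q) (by simpa using hq), ?_⟩
  exact Subtype.ext (by rw [rotationOfLine_mk, LinearEquiv.apply_symm_apply])

theorem continuous_rotationOfLine : Continuous rotationOfLine := by
  refine Continuous.quotient_lift (Continuous.subtype_mk ?_ _) _
  exact continuousOn_toRotation.comp_continuous
    (quaternionOfTuple.toLinearMap.continuous_of_finiteDimensional.comp continuous_subtype_val)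
    fun v => quaternionOfTuple.map_ne_zero_iff.mpr v.2

instance : CompactSpace (ℙ ℝ (Fin 4 → ℝ)) := by
  refine Function.Surjective.compactSpace (X := Metric.sphere (0 : Fin 4 → ℝ) 1)
    (f := fun x => Projectivization.mk ℝ x.1 (ne_zero_of_mem_unit_sphere x))
    (continuous_quotient_mk'.comp (continuous_subtype_val.subtype_mk _)) ?_
  intro x
  induction x using Projectivization.ind with | h v hv => ?_
  refine ⟨⟨‖v‖⁻¹ • v, by simp [norm_smul, hv]⟩, ?_⟩
  exact (Projectivization.mk_eq_mk_iff' ℝ _ v _ hv).mpr ⟨‖v‖⁻¹, rfl⟩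

/-- SO(3) is homeomorphic to real projective 3-space, the projectivization of `ℝ⁴`
(the quotient of `ℝ⁴ \ {0}` by nonzero scalar multiplication, with the quotient
topology; equivalently the quotient of `S³` by the antipodal identification). -/
theorem SO3_homeomorph_RP3 :
    Nonempty ((Matrix.specialOrthogonalGroup (Fin 3) ℝ) ≃ₜ
      Projectivization ℝ (Fin 4 → ℝ)) :=
  ⟨(continuous_rotationOfLine.homeoOfEquivCompactToT2
    (f := Equiv.ofBijective _ ⟨rotationOfLine_injective, rotationOfLine_surjective⟩)).symm⟩
end
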